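/- arXiv:1602.02057 — 7 statements merged into one kernel-verified Lean document; each statement's English description precedes it below -/
import Mathlib

section
/- For every natural number N ≥ 1, every real p ≥ 1, and every nonzero vector c ∈ ℝ^N with coefficients sorted in ascending order 0 ≤ c_1 ≤ c_2 ≤ … ≤ c_N, the Generalised Differential Sparsity satisfies 0 ≤ S_p(c) ≤ 1 − 1/N. -/
open Finset

/-- Generalised Differential Sparsity of order `p` of a vector `c ∈ ℝ^N`
(coefficients assumed sorted in ascending order):
`S_p(c) = (1/(N · Σ_i c_i^p)) · Σ_{i<j} (c_j − c_i)^p`. -/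
noncomputable def gds (N : ℕ) (p : ℝ) (c : Fin N → ℝ) : ℝ :=
  (1 / (N * ∑ i, c i ^ p)) *
    ∑ i : Fin N, ∑ j : Fin N, if i < j then (c j - c i) ^ p else 0

/-!
Each pair term satisfies `(c_j - c_i)^p ≤ c_j^p`, and `c_j` is the larger entry of exactly `j`
pairs, so the pair sum is at most `(N - 1) Σ c_j^p`, i.e. `(1 - 1/N)` times the denominator.
When `Σ c_j^p = 0` the junk value `x / 0 = 0` makes `gds` vanish.
-/

lemma Real.sub_rpow_le_rpow {a b p : ℝ} (ha : 0 ≤ a) (hab : a ≤ b) (hp : 0 ≤ p) :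
    (b - a) ^ p ≤ b ^ p :=
  Real.rpow_le_rpow (sub_nonneg.2 hab) (by linarith) hp

lemma gds_eq_div (N : ℕ) (p : ℝ) (c : Fin N → ℝ) :
    gds N p c = (∑ i : Fin N, ∑ j : Fin N, if i < j then (c j - c i) ^ p else 0) /
      (N * ∑ i, c i ^ p) := by
  rw [gds, one_div_mul_eq_div]

section PairSum

variable {N : ℕ} {c : Fin N → ℝ}

lemma pair_rpow_sum_nonneg (hmono : Monotone c) (p : ℝ) :
    0 ≤ ∑ i : Fin N, ∑ j : Fin N, if i < j then (c j - c i) ^ p else 0 :=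
  sum_nonneg fun i _ => sum_nonneg fun j _ => by
    split_ifs with hij
    · exact Real.rpow_nonneg (sub_nonneg.2 (hmono hij.le)) p
    · exact le_rfl

lemma sum_ite_lt_eq_sum_val_mul {R : Type*} [NonAssocSemiring R] (f : Fin N → R) :
    ∑ i : Fin N, ∑ j : Fin N, (if i < j then f j else 0) = ∑ j : Fin N, ((j : ℕ) : R) * f j := by
  rw [sum_comm]
  refine sum_congr rfl fun j _ => ?_
  rw [← sum_filter, sum_const, nsmul_eq_mul, filter_gt_eq_Iio, Fin.card_Iio]

lemma pair_rpow_sum_le {p : ℝ} (hp : 0 ≤ p) (hc0 : ∀ i, 0 ≤ c i) (hmono : Monotone c) :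
    (∑ i : Fin N, ∑ j : Fin N, if i < j then (c j - c i) ^ p else 0) ≤
      ((N : ℝ) - 1) * ∑ i, c i ^ p :=
  calc (∑ i : Fin N, ∑ j : Fin N, if i < j then (c j - c i) ^ p else 0)
      ≤ ∑ i : Fin N, ∑ j : Fin N, if i < j then c j ^ p else 0 := by
        gcongr with i _ j _
        split_ifs with hij
        · exact Real.sub_rpow_le_rpow (hc0 i) (hmono hij.le) hp
        · exact le_rfl
    _ = ∑ j : Fin N, (j : ℝ) * c j ^ p := sum_ite_lt_eq_sum_val_mul _
    _ ≤ ∑ j : Fin N, ((N : ℝ) - 1) * c j ^ p := by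
        gcongr with j _
        · exact Real.rpow_nonneg (hc0 j) p
        · have : (j : ℝ) + 1 ≤ N := by exact_mod_cast j.isLt
          linarith
    _ = ((N : ℝ) - 1) * ∑ i, c i ^ p := (mul_sum ..).symm

end PairSum

theorem gds_range_general (N : ℕ) (hN : 1 ≤ N) (p : ℝ) (hp : 1 ≤ p)
    (c : Fin N → ℝ) (hc0 : ∀ i, 0 ≤ c i) (hmono : Monotone c) :
    0 ≤ gds N p c ∧ gds N p c ≤ 1 - 1 / N := by
  have hN' : (1 : ℝ) ≤ N := by exact_mod_cast hN
  have hden : 0 ≤ (N : ℝ) * ∑ i, c i ^ p :=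
    mul_nonneg (Nat.cast_nonneg N) (sum_nonneg fun i _ => Real.rpow_nonneg (hc0 i) p)
  rw [gds_eq_div]
  refine ⟨div_nonneg (pair_rpow_sum_nonneg hmono p) hden,
    div_le_of_le_mul₀ hden (sub_nonneg.2 ((div_le_one (by positivity)).2 hN')) ?_⟩
  calc _ ≤ ((N : ℝ) - 1) * ∑ i, c i ^ p := pair_rpow_sum_le (by linarith) hc0 hmono
    _ = (1 - 1 / N) * (N * ∑ i, c i ^ p) := by field_simp

theorem gds_range (N : ℕ) (hN : 1 ≤ N) (p : ℝ) (hp : 1 ≤ p)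
    (c : Fin N → ℝ) (hc0 : ∀ i, 0 ≤ c i) (hmono : Monotone c) (hne : c ≠ 0) :
    0 ≤ gds N p c ∧ gds N p c ≤ 1 - 1 / N :=
  gds_range_general N hN p hp c hc0 hmono
end

section
/- (Scaling) For every natural number N ≥ 1, every real p ≥ 1, every nonzero vector c ∈ ℝ^N with coefficients sorted in ascending order 0 ≤ c_1 ≤ … ≤ c_N, and every real a > 0, the Generalised Differential Sparsity is invariant under scaling: S_p(a·c) = S_p(c). -/
open Finset

theorem gds_scaling (N : ℕ) (hN : 1 ≤ N) (p : ℝ) (hp : 1 ≤ p)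
    (c : Fin N → ℝ) (hc0 : ∀ i, 0 ≤ c i) (hmono : Monotone c) (hne : c ≠ 0)
    (a : ℝ) (ha : 0 < a) :
    gds N p (fun i => a * c i) = gds N p c := by
  have hap : (0:ℝ) < a ^ p := Real.rpow_pos_of_pos ha p
  have h1 : ∑ i, (a * c i) ^ p = a ^ p * ∑ i, c i ^ p := by
    rw [Finset.mul_sum]
    exact Finset.sum_congr rfl fun i _ => Real.mul_rpow ha.le (hc0 i)
  have h2 : ∑ i : Fin N, ∑ j : Fin N, (if i < j then (a * c j - a * c i) ^ p else 0)
      = a ^ p * ∑ i : Fin N, ∑ j : Fin N, (if i < j then (c j - c i) ^ p else 0) := by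
    rw [Finset.mul_sum]
    refine Finset.sum_congr rfl fun i _ => ?_
    rw [Finset.mul_sum]
    refine Finset.sum_congr rfl fun j _ => ?_
    by_cases hij : i < j
    · simp only [hij, if_true]
      rw [← mul_sub, Real.mul_rpow ha.le (sub_nonneg.2 (hmono hij.le))]
    · simp [hij]
  simp only [gds, h1, h2]
  rw [show (N:ℝ) * (a ^ p * ∑ i, c i ^ p) = a ^ p * ((N:ℝ) * ∑ i, c i ^ p) by ring,
    one_div, mul_inv]
  rw [show (a ^ p)⁻¹ * ((N:ℝ) * ∑ i, c i ^ p)⁻¹ *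
      (a ^ p * ∑ i : Fin N, ∑ j : Fin N, (if i < j then (c j - c i) ^ p else 0))
      = ((a ^ p)⁻¹ * a ^ p) * (((N:ℝ) * ∑ i, c i ^ p)⁻¹ *
        ∑ i : Fin N, ∑ j : Fin N, (if i < j then (c j - c i) ^ p else 0)) by ring,
    inv_mul_cancel₀ hap.ne', one_mul, one_div]
end

section
/- (Rising Tide) For every natural number N ≥ 2, every real p ≥ 1, every nonzero vector c ∈ ℝ^N with coefficients sorted in ascending order 0 ≤ c_1 ≤ … ≤ c_N whose coefficients are not all equal, and every real a > 0, adding a to every coefficient strictly decreases the Generalised Differential Sparsity: S_p([c_1 + a, …, c_N + a]) < S_p(c). -/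
open Finset

theorem gds_rising_tide (N : ℕ) (hN : 2 ≤ N) (p : ℝ) (hp : 1 ≤ p)
    (c : Fin N → ℝ) (hc0 : ∀ i, 0 ≤ c i) (hmono : Monotone c) (hne : c ≠ 0)
    (hnotconst : ∃ i j, c i ≠ c j)
    (a : ℝ) (ha : 0 < a) :
    gds N p (fun i => c i + a) < gds N p c := by
  have hp0 : (0:ℝ) < p := by linarith
  -- the numerator is invariant
  have hDsum : (∑ i : Fin N, ∑ j : Fin N, if i < j then ((c j + a) - (c i + a)) ^ p else 0)
      = ∑ i : Fin N, ∑ j : Fin N, if i < j then (c j - c i) ^ p else 0 := by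
    simp only [add_sub_add_right_eq_sub]
  set D : ℝ := ∑ i : Fin N, ∑ j : Fin N, if i < j then (c j - c i) ^ p else 0 with hD
  -- D > 0
  obtain ⟨i0, j0, hij⟩ := hnotconst
  have hne' : i0 ≠ j0 := fun h => hij (by rw [h])
  obtain ⟨i1, j1, hlt, hclt⟩ : ∃ i j : Fin N, i < j ∧ c i < c j := by
    rcases lt_or_gt_of_ne hne' with h | h
    · exact ⟨i0, j0, h, lt_of_le_of_ne (hmono h.le) hij⟩
    · exact ⟨j0, i0, h, lt_of_le_of_ne (hmono h.le) (Ne.symm hij)⟩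
  have hterm_nonneg : ∀ i j : Fin N, 0 ≤ (if i < j then (c j - c i) ^ p else 0) := by
    intro i j
    split
    · exact Real.rpow_nonneg (by linarith [hmono (le_of_lt ‹i < j›)]) p
    · exact le_refl 0
  have hDpos : 0 < D := by
    rw [hD]
    apply Finset.sum_pos' (fun i _ => Finset.sum_nonneg fun j _ => hterm_nonneg i j)
    refine ⟨i1, Finset.mem_univ _, ?_⟩
    apply Finset.sum_pos' (fun j _ => hterm_nonneg i1 j)
    refine ⟨j1, Finset.mem_univ _, ?_⟩
    rw [if_pos hlt]
    exact Real.rpow_pos_of_pos (by linarith) p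
  -- T > 0
  obtain ⟨k, hk⟩ := Function.ne_iff.mp hne
  have hck : 0 < c k := lt_of_le_of_ne (hc0 k) (Ne.symm hk)
  have hTpos : 0 < ∑ i, c i ^ p := by
    apply Finset.sum_pos' (fun i _ => Real.rpow_nonneg (hc0 i) p)
    exact ⟨k, Finset.mem_univ _, Real.rpow_pos_of_pos hck p⟩
  -- T' > T
  have hTlt : (∑ i, c i ^ p) < ∑ i, (c i + a) ^ p := by
    apply Finset.sum_lt_sum_of_nonempty
    · exact Finset.univ_nonempty_iff.mpr ⟨⟨0, by omega⟩⟩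
    · intro i _
      exact Real.rpow_lt_rpow (hc0 i) (by linarith) hp0
  have hNpos : (0:ℝ) < N := by
    have : (2:ℝ) ≤ N := by exact_mod_cast hN
    linarith
  have h1 : (0:ℝ) < N * ∑ i, c i ^ p := mul_pos hNpos hTpos
  have h2 : N * (∑ i, c i ^ p) < N * ∑ i, (c i + a) ^ p :=
    mul_lt_mul_of_pos_left hTlt hNpos
  unfold gds
  rw [hDsum]
  exact mul_lt_mul_of_pos_right (one_div_lt_one_div_of_lt h1 h2) hDpos
end

section
/- (Limit behaviour in the order) Let N ≥ 1 be a natural number and let c ∈ ℝ^N be a vector with strictly positive coefficients sorted in ascending order 0 < c_1 ≤ c_2 ≤ … ≤ c_N. Then the Generalised Differential Sparsity of c tends to 0 as the order tends to infinity: lim_{p → +∞} S_p(c) = 0. -/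
/-!
For positive reals `a, b` one has `|b - a| = max a b - min a b < max a b`. With
`ρᵢⱼ = |c_j - c_i| / max c_i c_j < 1`, every numerator term of the GDS therefore satisfies
`|(c_j - c_i) ^ p| ≤ ρᵢⱼ ^ p · max c_i c_j ^ p ≤ ρᵢⱼ ^ p · ∑ₖ c_k ^ p`, whence
`|S_p(c)| ≤ (1/N) ∑ᵢⱼ ρᵢⱼ ^ p`, a finite sum of geometric decays in `p`.
-/

open Finset

open Filter Topology

noncomputable def relGap (a b : ℝ) : ℝ := |b - a| / max a b

section relGap

variable {a b : ℝ}

lemma relGap_nonneg (ha : 0 < a) : 0 ≤ relGap a b :=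
  div_nonneg (abs_nonneg _) (le_max_of_le_left ha.le)

lemma relGap_lt_one (ha : 0 < a) (hb : 0 < b) : relGap a b < 1 := by
  rw [relGap, div_lt_one (lt_max_of_lt_left ha), ← max_sub_min_eq_abs]
  exact sub_lt_self _ (lt_min ha hb)

lemma abs_sub_eq_relGap_mul_max (ha : 0 < a) : |b - a| = relGap a b * max a b := by
  rw [relGap, div_mul_cancel₀ _ (lt_max_of_lt_left ha).ne']

lemma tendsto_relGap_rpow_atTop (ha : 0 < a) (hb : 0 < b) :
    Tendsto (fun p : ℝ => relGap a b ^ p) atTop (𝓝 0) :=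
  tendsto_rpow_atTop_of_base_lt_one _ (by linarith [relGap_nonneg (b := b) ha])
    (relGap_lt_one ha hb)

end relGap

lemma abs_rpow_sub_le_relGap_rpow_mul_sum {ι : Type*} [Fintype ι] {c : ι → ℝ}
    (hc : ∀ k, 0 < c k) (i j : ι) (p : ℝ) :
    |(c j - c i) ^ p| ≤ relGap (c i) (c j) ^ p * ∑ k, c k ^ p := by
  have hmax : max (c i) (c j) ^ p ≤ ∑ k, c k ^ p := by
    rcases max_choice (c i) (c j) with h | h <;> rw [h] <;>
      exact single_le_sum (fun k _ => (Real.rpow_nonneg (hc k).le p)) (mem_univ _)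
  calc |(c j - c i) ^ p| ≤ |c j - c i| ^ p := Real.abs_rpow_le_abs_rpow _ _
    _ = relGap (c i) (c j) ^ p * max (c i) (c j) ^ p := by
      rw [abs_sub_eq_relGap_mul_max (hc i),
        Real.mul_rpow (relGap_nonneg (hc i)) (le_max_of_le_left (hc i).le)]
    _ ≤ relGap (c i) (c j) ^ p * ∑ k, c k ^ p :=
      mul_le_mul_of_nonneg_left hmax (Real.rpow_nonneg (relGap_nonneg (hc i)) p)

lemma abs_gds_le_sum_relGap_rpow {N : ℕ} {c : Fin N → ℝ} (hc : ∀ k, 0 < c k) (p : ℝ) :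
    |gds N p c| ≤ (∑ i, ∑ j, relGap (c i) (c j) ^ p) / N := by
  have hgap : ∀ i j, 0 ≤ relGap (c i) (c j) ^ p := fun i j =>
    Real.rpow_nonneg (relGap_nonneg (hc i)) p
  set S := ∑ k, c k ^ p
  have hS : 0 ≤ S := sum_nonneg fun k _ => Real.rpow_nonneg (hc k).le p
  rcases (mul_nonneg (Nat.cast_nonneg N) hS).eq_or_lt with hNS | hNS
  · rw [gds, ← hNS, div_zero, zero_mul, abs_zero]
    exact div_nonneg (sum_nonneg fun i _ => sum_nonneg fun j _ => hgap i j) (Nat.cast_nonneg N)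
  have hN : (N : ℝ) ≠ 0 := left_ne_zero_of_mul hNS.ne'
  calc |gds N p c|
      = 1 / (N * S) * |∑ i, ∑ j, if i < j then (c j - c i) ^ p else 0| := by
        rw [gds, abs_mul, abs_of_pos (one_div_pos.mpr hNS)]
    _ ≤ 1 / (N * S) * ∑ i, ∑ j, relGap (c i) (c j) ^ p * S := by
      gcongr
      refine (abs_sum_le_sum_abs _ _).trans (sum_le_sum fun i _ => ?_)
      refine (abs_sum_le_sum_abs _ _).trans (sum_le_sum fun j _ => ?_)
      split_ifs
      · exact abs_rpow_sub_le_relGap_rpow_mul_sum hc i j p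
      · exact abs_zero.trans_le (mul_nonneg (hgap i j) hS)
    _ = (∑ i, ∑ j, relGap (c i) (c j) ^ p) / N := by
      simp only [← sum_mul]
      field_simp [(right_ne_zero_of_mul hNS.ne')]

theorem gds_tendsto_zero_general (N : ℕ)
    (c : Fin N → ℝ) (hc0 : ∀ i, 0 < c i) :
    Filter.Tendsto (fun p : ℝ => gds N p c) Filter.atTop (nhds 0) := by
  have hsum : Tendsto (fun p : ℝ => (∑ i, ∑ j, relGap (c i) (c j) ^ p) / N) atTop (𝓝 0) := by
    simpa using (tendsto_finsetSum _ fun i _ => tendsto_finsetSum _ fun j _ =>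
      tendsto_relGap_rpow_atTop (hc0 i) (hc0 j)).div_const (N : ℝ)
  exact squeeze_zero_norm (abs_gds_le_sum_relGap_rpow hc0) hsum

theorem gds_tendsto_zero (N : ℕ) (hN : 1 ≤ N)
    (c : Fin N → ℝ) (hc0 : ∀ i, 0 < c i) (hmono : Monotone c) :
    Filter.Tendsto (fun p : ℝ => gds N p c) Filter.atTop (nhds 0) :=
  gds_tendsto_zero_general N c hc0
end

section
/- For every natural number N ≥ 1 and every nonzero vector c ∈ ℝ^N with nonnegative coefficients sorted in ascending order 0 ≤ c_1 ≤ c_2 ≤ … ≤ c_N, the Generalised Differential Sparsity of order 1 equals the Gini Index: S_1(c) = GI(c) = 1 − 2 · Σ_{i=1}^N (c_i / ‖c‖_1) · ((N − i + 1/2) / N). -/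
open Finset

/-- The Gini Index of a vector with nonnegative coefficients sorted in ascending
order: `GI(c) = 1 − 2 Σ_{i=1}^N (c_i/‖c‖₁) · ((N − i + 1/2)/N)` (1-based indices). -/
noncomputable def giniIndex (N : ℕ) (c : Fin N → ℝ) : ℝ :=
  1 - 2 * ∑ i : Fin N, (c i / ∑ k, c k) * ((N - ((i : ℕ) + 1) + 1 / 2) / N)

/-! For `p = 1` the power disappears, and in `∑_{i<j} (c_j - c_i)` the coefficient `c_k` is counted
`+1` once for each of the `k` smaller indices and `-1` once for each of the `N - 1 - k` larger ones
(0-based). Both sides thus equal `∑_k (2k + 1 - N) c_k / (N ‖c‖₁)` as soon as `‖c‖₁ ≠ 0`. -/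

namespace Fin

variable {M : Type*} [AddCommMonoid M] {n : ℕ}

theorem sum_sum_ite_lt_right (f : Fin n → M) :
    ∑ i, ∑ j, (if i < j then f j else 0) = ∑ k : Fin n, (k : ℕ) • f k := by
  rw [sum_comm]
  refine sum_congr rfl fun k _ => ?_
  rw [← sum_filter, filter_gt_eq_Iio, Finset.sum_const, card_Iio]

theorem sum_sum_ite_lt_left (f : Fin n → M) :
    ∑ i, ∑ j, (if i < j then f i else 0) = ∑ k : Fin n, (n - 1 - k : ℕ) • f k := by
  refine sum_congr rfl fun k _ => ?_
  rw [← sum_filter, filter_lt_eq_Ioi, Finset.sum_const, card_Ioi]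

theorem sum_sum_ite_lt_sub {R : Type*} [CommRing R] (f : Fin n → R) :
    ∑ i, ∑ j, (if i < j then f j - f i else 0) = ∑ k : Fin n, (2 * (k : ℕ) + 1 - n : R) * f k := by
  have hsplit : ∀ i j : Fin n, (if i < j then f j - f i else 0) =
      (if i < j then f j else 0) - (if i < j then f i else 0) := fun i j => by
    rw [ite_sub_ite, sub_zero]
  simp only [hsplit, sum_sub_distrib]
  rw [sum_sum_ite_lt_right, sum_sum_ite_lt_left, ← sum_sub_distrib]
  refine sum_congr rfl fun k _ => ?_
  have hk : 1 + (k : ℕ) ≤ n := by omega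
  rw [nsmul_eq_mul, nsmul_eq_mul, Nat.sub_sub, Nat.cast_sub hk]
  push_cast
  ring

end Fin

theorem gds_one_eq (N : ℕ) (c : Fin N → ℝ) :
    gds N 1 c = (∑ k : Fin N, (2 * (k : ℕ) + 1 - N : ℝ) * c k) / (N * ∑ k, c k) := by
  simp only [gds, Real.rpow_one, Fin.sum_sum_ite_lt_sub, one_div_mul_eq_div]

theorem giniIndex_eq {N : ℕ} {c : Fin N → ℝ} (hN : N ≠ 0) (hc : ∑ k, c k ≠ 0) :
    giniIndex N c = (∑ k : Fin N, (2 * (k : ℕ) + 1 - N : ℝ) * c k) / (N * ∑ k, c k) := by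
  have hterm : ∀ k : Fin N, 2 * ((c k / ∑ i, c i) * ((N - ((k : ℕ) + 1) + 1 / 2) / N)) =
      (N * c k - (2 * (k : ℕ) + 1 - N) * c k) / (N * ∑ i, c i) := fun k => by
    field_simp
    ring
  rw [giniIndex, mul_sum, sum_congr rfl fun k _ => hterm k, ← sum_div, sum_sub_distrib, ← mul_sum,
    sub_div, mul_div_mul_left _ _ (Nat.cast_ne_zero.2 hN), div_self hc, sub_sub_cancel]

theorem gds_one_eq_gini_general (N : ℕ)
    (c : Fin N → ℝ) (hc0 : ∀ i, 0 ≤ c i) (hne : c ≠ 0) :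
    gds N 1 c = giniIndex N c := by
  have hc : ∑ k, c k ≠ 0 := fun h => hne ((Fintype.sum_eq_zero_iff_of_nonneg hc0).1 h)
  have hN : N ≠ 0 := by
    rintro rfl
    exact hc sum_empty
  rw [gds_one_eq, giniIndex_eq hN hc]

theorem gds_one_eq_gini (N : ℕ) (hN : 1 ≤ N)
    (c : Fin N → ℝ) (hc0 : ∀ i, 0 ≤ c i) (hmono : Monotone c) (hne : c ≠ 0) :
    gds N 1 c = giniIndex N c :=
  gds_one_eq_gini_general N c hc0 hne
end

section
/- (Efficient even-order formula) Let N ≥ 1 and k ≥ 1 be natural numbers and let c ∈ ℝ^N be a nonzero vector with nonnegative coefficients sorted in ascending order 0 ≤ c_1 ≤ … ≤ c_N. Then the Generalised Differential Sparsity of order 2k satisfies S_{2k}(c) = 1 + (1/(N · ‖c‖_{2k}^{2k})) · [ Σ_{ω=1}^{k−1} (−1)^ω · C(2k, ω) · ‖c‖_ω^ω · ‖c‖_{2k−ω}^{2k−ω} + ((−1)^k / 2) · C(2k, k) · (‖c‖_k^k)^2 ], where ‖c‖_ω^ω = Σ_{i=1}^N c_i^ω and C(n, r) denotes the binomial coefficient.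 -/
open Finset

/-! The summand `(c j - c i) ^ (2 * k)` is symmetric in `i, j` and vanishes on the diagonal, so
the sum over `i < j` is half the sum over all pairs. Expanding the full sum binomially gives
`∑ m ≤ 2k, (-1)^m C(2k, m) ‖c‖_m^m ‖c‖_{2k-m}^{2k-m}`, whose terms are invariant under
`m ↦ 2k - m`; folding it at `m = k` and using `‖c‖_0^0 = N` for the extreme terms `m = 0, 2k`
leaves `N ‖c‖_{2k}^{2k}` plus the bracket of the formula. -/

theorem sum_sum_eq_two_nsmul_sum_sum_ite_lt {ι M : Type*} [Fintype ι] [LinearOrder ι]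
    [AddCommMonoid M] {f : ι → ι → M} (hdiag : ∀ i, f i i = 0)
    (hsymm : ∀ i j, f i j = f j i) :
    ∑ i, ∑ j, f i j = 2 • ∑ i, ∑ j, if i < j then f i j else 0 := by
  have hsplit : ∀ i j, f i j = (if i < j then f i j else 0) + (if j < i then f j i else 0) := by
    intro i j
    rcases lt_trichotomy i j with h | rfl | h
    · simp [h, h.not_gt]
    · simp [hdiag]
    · simp [h, h.not_gt, hsymm i j]
  rw [sum_congr rfl fun i _ => sum_congr rfl fun j _ => hsplit i j]
  simp only [sum_add_distrib, two_nsmul]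
  rw [sum_comm (f := fun i j => if j < i then f j i else 0)]

theorem sum_sum_sub_pow {ι R : Type*} [Fintype ι] [CommRing R] (c : ι → R) (n : ℕ) :
    ∑ i, ∑ j, (c j - c i) ^ n =
      ∑ m ∈ range (n + 1), (-1) ^ (n - m) * n.choose m * (∑ i, c i ^ m) * ∑ i, c i ^ (n - m) := by
  have hterm : ∀ i j, (c j - c i) ^ n = ∑ m ∈ range (n + 1),
      (-1) ^ (n - m) * n.choose m * (c j ^ m * c i ^ (n - m)) := fun i j => by
    rw [sub_eq_add_neg, add_pow]
    exact sum_congr rfl fun m _ => by rw [neg_pow]; ring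
  simp only [hterm]
  rw [sum_comm_cycle]
  refine sum_congr rfl fun m _ => ?_
  rw [mul_assoc _ (∑ i, c i ^ m), sum_mul_sum, mul_sum, sum_comm]
  simp only [mul_sum]

theorem neg_one_pow_two_mul_sub {R : Type*} [Monoid R] [HasDistribNeg R] {k m : ℕ}
    (h : m ≤ 2 * k) : (-1 : R) ^ (2 * k - m) = (-1) ^ m := by
  rcases Nat.even_or_odd m with hm | hm
  · rw [hm.neg_one_pow, ((Nat.even_sub h).2 (iff_of_true (even_two_mul k) hm)).neg_one_pow]
  · rw [hm.neg_one_pow, ((Nat.odd_sub h).2 (iff_of_false (Nat.not_odd_iff_even.2 (even_two_mul k))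
      (Nat.not_even_iff_odd.2 hm))).neg_one_pow]

theorem sum_sum_sub_pow_two_mul {ι R : Type*} [Fintype ι] [CommRing R] (c : ι → R) (k : ℕ) :
    ∑ i, ∑ j, (c j - c i) ^ (2 * k) = ∑ m ∈ range (2 * k + 1),
      (-1) ^ m * (2 * k).choose m * (∑ i, c i ^ m) * ∑ i, c i ^ (2 * k - m) := by
  rw [sum_sum_sub_pow]
  exact sum_congr rfl fun m hm => by
    rw [neg_one_pow_two_mul_sub (Nat.lt_succ_iff.1 (mem_range.1 hm))]

theorem sum_range_two_mul_add_one_of_symm {M : Type*} [AddCommMonoid M] (f : ℕ → M) (k : ℕ)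
    (h : ∀ m ≤ 2 * k, f (2 * k - m) = f m) :
    ∑ m ∈ range (2 * k + 1), f m = 2 • ∑ m ∈ range k, f m + f k := by
  have hupper : ∑ x ∈ range (k + 1), f (k + x) = ∑ x ∈ range (k + 1), f (k + 1 - 1 - x) :=
    sum_congr rfl fun x hx => by
      rw [mem_range] at hx
      rw [← h (k + x) (by omega)]
      congr 1; omega
  rw [show 2 * k + 1 = k + (k + 1) by ring, sum_range_add, hupper, sum_range_reflect,
    sum_range_succ, two_nsmul, add_assoc]

theorem sum_sum_ite_lt_sub_pow_two_mul {ι R : Type*} [Fintype ι] [LinearOrder ι] [Field R]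
    [CharZero R] (c : ι → R) {k : ℕ} (hk : 1 ≤ k) :
    ∑ i, ∑ j, (if i < j then (c j - c i) ^ (2 * k) else 0) =
      Fintype.card ι * ∑ i, c i ^ (2 * k) +
        (∑ ω ∈ Ico 1 k, (-1) ^ ω * (2 * k).choose ω * (∑ i, c i ^ ω) * ∑ i, c i ^ (2 * k - ω)) +
        (-1) ^ k / 2 * (2 * k).choose k * (∑ i, c i ^ k) ^ 2 := by
  set t : ℕ → R := fun m => (-1) ^ m * (2 * k).choose m * (∑ i, c i ^ m) * ∑ i, c i ^ (2 * k - m)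
  have ht : ∀ m ≤ 2 * k, t (2 * k - m) = t m := fun m hm => by
    simp only [t, neg_one_pow_two_mul_sub hm, Nat.choose_symm hm, Nat.sub_sub_self hm]
    ring
  have ht0 : t 0 = Fintype.card ι * ∑ i, c i ^ (2 * k) := by simp [t]
  have htk : t k = (-1) ^ k * (2 * k).choose k * (∑ i, c i ^ k) ^ 2 := by
    simp only [t, show 2 * k - k = k by omega]
    ring
  have hfull := sum_sum_eq_two_nsmul_sum_sum_ite_lt (f := fun i j => (c j - c i) ^ (2 * k))
    (fun i => by simp [show 2 * k ≠ 0 by omega])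
    (fun i j => by rw [← neg_sub, (even_two_mul k).neg_pow])
  rw [sum_sum_sub_pow_two_mul, sum_range_two_mul_add_one_of_symm t k ht,
    sum_range_eq_add_Ico t hk, ht0, htk] at hfull
  simp only [nsmul_eq_mul, Nat.cast_ofNat] at hfull
  linear_combination -hfull / 2

theorem gds_even_formula_general (N : ℕ) (k : ℕ) (hk : 1 ≤ k)
    (c : Fin N → ℝ) (hne : c ≠ 0) :
    gds N ((2 * k : ℕ) : ℝ) c =
      1 + (1 / (N * ∑ i, c i ^ (2 * k))) *
        ((∑ ω ∈ Finset.Ico 1 k, (-1 : ℝ) ^ ω * (Nat.choose (2 * k) ω) *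
            (∑ i, c i ^ ω) * (∑ i, c i ^ (2 * k - ω))) +
          ((-1 : ℝ) ^ k / 2) * (Nat.choose (2 * k) k) * (∑ i, c i ^ k) ^ 2) := by
  obtain ⟨i₀, hi₀⟩ := Function.ne_iff.1 hne
  have hpos : 0 < ∑ i, c i ^ (2 * k) :=
    sum_pos' (fun i _ => (even_two_mul k).pow_nonneg _)
      ⟨i₀, mem_univ _, (even_two_mul k).pow_pos hi₀⟩
  have hN : (N : ℝ) ≠ 0 := Nat.cast_ne_zero.2 (Fin.pos i₀).ne'
  unfold gds
  simp only [Real.rpow_natCast]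
  rw [sum_sum_ite_lt_sub_pow_two_mul c hk, Fintype.card_fin]
  field_simp
  ring

theorem gds_even_formula (N : ℕ) (hN : 1 ≤ N) (k : ℕ) (hk : 1 ≤ k)
    (c : Fin N → ℝ) (hc0 : ∀ i, 0 ≤ c i) (hmono : Monotone c) (hne : c ≠ 0) :
    gds N ((2 * k : ℕ) : ℝ) c =
      1 + (1 / (N * ∑ i, c i ^ (2 * k))) *
        ((∑ ω ∈ Finset.Ico 1 k, (-1 : ℝ) ^ ω * (Nat.choose (2 * k) ω) *
            (∑ i, c i ^ ω) * (∑ i, c i ^ (2 * k - ω))) +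
          ((-1 : ℝ) ^ k / 2) * (Nat.choose (2 * k) k) * (∑ i, c i ^ k) ^ 2) :=
  gds_even_formula_general N k hk c hne
end

section
/- (Efficient odd-order formula) Let N ≥ 1 and k ≥ 0 be natural numbers and let c ∈ ℝ^N be a nonzero vector with nonnegative coefficients sorted in ascending order 0 ≤ c_1 ≤ … ≤ c_N. Then the Generalised Differential Sparsity of order 2k+1 satisfies S_{2k+1}(c) = (1/(N · ‖c‖_{2k+1}^{2k+1})) · Σ_{ω=0}^{k} (−1)^ω · C(2k+1, ω) · Σ_{i=1}^N ( c_i^{2k+1−ω} · f_ω(i) − c_i^ω · f_{2k+1−ω}(i) ), where f_ω(i) = Σ_{j=1}^i c_j^ω (with the convention c_j^0 = 1 so that f_0(i) = i), ‖c‖_{2k+1}^{2k+1} = Σ_{i=1}^N c_i^{2k+1}, and C(n, r) denotes the binomial coefficient. -/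
/-! Expanding `(c j - c i) ^ (2k+1)` binomially and pairing the terms of index `ω` and `2k+1-ω`,
which carry the same binomial coefficient and opposite signs, writes every summand of `S_{2k+1}`
as a sum over `ω ≤ k` of `±C(2k+1, ω) (c_j^{2k+1-ω} c_i^ω - c_j^ω c_i^{2k+1-ω})`. Summed over
the pairs `i < j`, each half becomes `∑_j c_j^{2k+1-ω} f_ω(j)` up to the diagonal term
`c_j^{2k+1}`, and these diagonal terms cancel between the two halves. -/

open Finset

/-- Partial power sum `f_ω(i) = Σ_{j ≤ i} c_j^ω` (with `c_j^0 = 1`). -/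
noncomputable def partialPowerSum (N : ℕ) (c : Fin N → ℝ) (ω : ℕ) (i : Fin N) : ℝ :=
  ∑ j : Fin N, if j ≤ i then c j ^ ω else 0

theorem Finset.sum_range_add_self_eq_sum_add_reflect {M : Type*} [AddCommMonoid M]
    (f : ℕ → M) (m : ℕ) :
    ∑ i ∈ range (m + m), f i = ∑ i ∈ range m, (f i + f (m + m - 1 - i)) := by
  rw [sum_range_add, sum_add_distrib, ← sum_range_reflect (fun i ↦ f (m + i))]
  refine congrArg _ (sum_congr rfl fun i hi ↦ congrArg f ?_)
  have := mem_range.mp hi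
  omega

theorem sub_pow_two_mul_add_one {R : Type*} [CommRing R] (x y : R) (k : ℕ) :
    (x - y) ^ (2 * k + 1) = ∑ ω ∈ range (k + 1), (-1) ^ ω * ((2 * k + 1).choose ω : R) *
      (x ^ (2 * k + 1 - ω) * y ^ ω - x ^ ω * y ^ (2 * k + 1 - ω)) := by
  rw [sub_pow, show 2 * k + 1 + 1 = (k + 1) + (k + 1) by ring,
    sum_range_add_self_eq_sum_add_reflect]
  refine sum_congr rfl fun ω hω ↦ ?_
  have hω : ω ≤ k := Nat.lt_succ_iff.mp (mem_range.mp hω)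
  rw [show k + 1 + (k + 1) - 1 - ω = 2 * k + 1 - ω by omega,
    Nat.sub_sub_self (by omega : ω ≤ 2 * k + 1), Nat.choose_symm (by omega : ω ≤ 2 * k + 1),
    show 2 * k + 1 - ω + (2 * k + 1) = ω + 2 * (2 * k + 1 - ω) by omega]
  simp only [pow_add, pow_mul, neg_one_sq, one_pow, pow_one]
  ring

theorem sum_pow_mul_partialPowerSum_sub {N : ℕ} (c : Fin N → ℝ) (p q : ℕ) :
    ∑ i : Fin N, (c i ^ p * partialPowerSum N c q i - c i ^ q * partialPowerSum N c p i) =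
      ∑ i : Fin N, ∑ j : Fin N, if i < j then c j ^ p * c i ^ q - c j ^ q * c i ^ p else 0 := by
  simp only [partialPowerSum, mul_sum, ← sum_sub_distrib, mul_ite, mul_zero]
  rw [sum_comm]
  refine sum_congr rfl fun i _ ↦ sum_congr rfl fun j _ ↦ ?_
  rcases lt_trichotomy i j with h | rfl | h
  · simp [h, h.le]
  · simp [mul_comm]
  · simp [h.not_gt, h.not_ge]

theorem gds_odd_formula_general (N : ℕ) (k : ℕ)
    (c : Fin N → ℝ) :
    gds N ((2 * k + 1 : ℕ) : ℝ) c =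
      (1 / (N * ∑ i, c i ^ (2 * k + 1))) *
        ∑ ω ∈ Finset.range (k + 1), (-1 : ℝ) ^ ω * (Nat.choose (2 * k + 1) ω) *
          ∑ i : Fin N,
            (c i ^ (2 * k + 1 - ω) * partialPowerSum N c ω i -
              c i ^ ω * partialPowerSum N c (2 * k + 1 - ω) i) := by
  simp only [gds, Real.rpow_natCast]
  congr 1
  simp only [sum_pow_mul_partialPowerSum_sub, mul_sum, mul_ite, mul_zero]
  conv_rhs => rw [sum_comm]
  refine sum_congr rfl fun i _ ↦ ?_
  conv_rhs => rw [sum_comm]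
  refine sum_congr rfl fun j _ ↦ ?_
  rw [sum_ite_irrel, sum_const_zero, sub_pow_two_mul_add_one]

theorem gds_odd_formula (N : ℕ) (hN : 1 ≤ N) (k : ℕ)
    (c : Fin N → ℝ) (hc0 : ∀ i, 0 ≤ c i) (hmono : Monotone c) (hne : c ≠ 0) :
    gds N ((2 * k + 1 : ℕ) : ℝ) c =
      (1 / (N * ∑ i, c i ^ (2 * k + 1))) *
        ∑ ω ∈ Finset.range (k + 1), (-1 : ℝ) ^ ω * (Nat.choose (2 * k + 1) ω) *
          ∑ i : Fin N,
            (c i ^ (2 * k + 1 - ω) * partialPowerSum N c ω i -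
              c i ^ ω * partialPowerSum N c (2 * k + 1 - ω) i) :=
  gds_odd_formula_general N k c
end
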